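/- Let p ∈ (0,1) and let (U_k)_{k≥1} be i.i.d. random variables with P(U_k = 1) = p and P(U_k = −1) = 1 − p. Define X'_n = Σ_{k=1}^n Re(i^{k−1}) U_k and Y'_n = Σ_{k=1}^n Im(i^{k−1}) U_k (where i is the imaginary unit), and let A_n(X',Y') = (1/2) Σ_{1≤k<l≤n} ((X'_k − X'_{k−1})(Y'_l − Y'_{l−1}) − (Y'_k − Y'_{k−1})(X'_l − X'_{l−1})) be the discrete stochastic area. Then the rescaled expected area converges to the area anomaly: lim_{n→∞} E[A_n(X',Y')]/(2 n p (1−p)) = (2p−1)²/(8 p (1−p)). -/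

import Mathlib

/-!
Expanding the area bilinearly, the increments of the walk at times `k < l` contribute
`Im(i^(l-k)) U_k U_l`, and `E[U_k U_l] = (2p-1)²` for `k ≠ l`. Hence `E[A_n]` is `(2p-1)²` times
the area of the deterministic walk `Σ i^k`, which runs around the unit square once every four
steps, so its area is `n/4 + O(1)`: the partial sums of the geometric series `Σ i^m` are bounded.
-/

open MeasureTheory ProbabilityTheory Filter Finset Complex Topology

noncomputable def discreteArea (X Y : ℕ → ℝ) (n : ℕ) : ℝ :=
  (1 / 2) * ∑ k ∈ Icc 1 n, ∑ l ∈ Icc (k + 1) n,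
    ((X k - X (k - 1)) * (Y l - Y (l - 1)) - (Y k - Y (k - 1)) * (X l - X (l - 1)))

theorem sum_Icc_sum_Icc_eq_sum_range_sum_range {M : Type*} [AddCommMonoid M] (f : ℕ → ℕ → M)
    (n : ℕ) :
    ∑ k ∈ Icc 1 n, ∑ l ∈ Icc (k + 1) n, f k l =
      ∑ k ∈ range n, ∑ d ∈ range (n - 1 - k), f (k + 1) (k + 2 + d) := by
  rw [← Ico_add_one_right_eq_Icc, sum_Ico_eq_sum_range]
  refine sum_congr (by simp) fun k _ => ?_
  rw [← Ico_add_one_right_eq_Icc, sum_Ico_eq_sum_range]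
  refine sum_congr (by congr 1; omega) fun d _ => ?_
  congr 1 <;> omega

theorem discreteArea_eq_sum_range (X Y : ℕ → ℝ) (n : ℕ) :
    discreteArea X Y n = (1 / 2) * ∑ k ∈ range n, ∑ d ∈ range (n - 1 - k),
      ((X (k + 1) - X k) * (Y (k + 2 + d) - Y (k + 1 + d)) -
        (Y (k + 1) - Y k) * (X (k + 2 + d) - X (k + 1 + d))) := by
  rw [discreteArea, sum_Icc_sum_Icc_eq_sum_range_sum_range]
  simp only [add_tsub_cancel_right, show ∀ k d, k + 2 + d - 1 = k + 1 + d by omega]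

theorem re_mul_im_sub_im_mul_re_I_pow_add (k d : ℕ) :
    (I ^ k).re * (I ^ (k + d)).im - (I ^ k).im * (I ^ (k + d)).re = (I ^ d).im := by
  have h : normSq (I ^ k) = 1 := by simp
  rw [normSq_apply] at h
  simp only [pow_add, mul_re, mul_im]
  linear_combination (I ^ d).im * h

theorem discreteArea_rotatingWalk (u : ℕ → ℝ) (n : ℕ) :
    discreteArea (fun m => ∑ k ∈ range m, (I ^ k).re * u k)
      (fun m => ∑ k ∈ range m, (I ^ k).im * u k) n =
      (1 / 2) * ∑ k ∈ range n, ∑ d ∈ range (n - 1 - k),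
        (I ^ (d + 1)).im * (u k * u (k + 1 + d)) := by
  simp only [discreteArea_eq_sum_range, show ∀ k d, k + 2 + d = k + 1 + d + 1 by omega,
    sum_range_succ_sub_sum]
  congr 1
  refine sum_congr rfl fun k _ => sum_congr rfl fun d _ => ?_
  rw [← re_mul_im_sub_im_mul_re_I_pow_add k (d + 1), show k + (d + 1) = k + 1 + d by ring]
  ring

noncomputable def squareWalkArea (n : ℕ) : ℝ :=
  discreteArea (fun m => ∑ k ∈ range m, (I ^ k).re) (fun m => ∑ k ∈ range m, (I ^ k).im) n

theorem squareWalkArea_eq (n : ℕ) :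
    squareWalkArea n = (1 / 2) * ∑ k ∈ range n, ∑ d ∈ range (n - 1 - k), (I ^ (d + 1)).im := by
  simpa [squareWalkArea] using discreteArea_rotatingWalk (fun _ => 1) n

theorem two_mul_sum_range_im_I_pow_succ (m : ℕ) :
    2 * ∑ d ∈ range m, (I ^ (d + 1)).im = 1 - (I ^ m).re + (I ^ m).im := by
  induction m with
  | zero => simp
  | succ m ih =>
    rw [sum_range_succ, mul_add, ih]
    simp only [pow_succ, mul_re, mul_im, I_re, I_im]
    ring

theorem four_mul_squareWalkArea (n : ℕ) :
    4 * squareWalkArea n = n + ((∑ m ∈ range n, I ^ m).im - (∑ m ∈ range n, I ^ m).re) := by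
  rw [squareWalkArea_eq, sum_range_reflect (fun m => ∑ d ∈ range m, (I ^ (d + 1)).im),
    ← mul_assoc, show (4 : ℝ) * (1 / 2) = 2 by norm_num, mul_sum]
  simp only [two_mul_sum_range_im_I_pow_succ, im_sum, re_sum, sum_add_distrib, sum_sub_distrib,
    sum_const, card_range, nsmul_eq_mul, mul_one]
  ring

theorem norm_sum_range_I_pow_le (n : ℕ) : ‖∑ m ∈ range n, I ^ m‖ ≤ 2 := by
  have hI : I ≠ 1 := by simp [Complex.ext_iff]
  have h1 : 1 ≤ ‖I - 1‖ := by simpa using abs_re_le_norm (I - 1)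
  rw [geom_sum_eq hI, norm_div]
  calc ‖I ^ n - 1‖ / ‖I - 1‖ ≤ ‖I ^ n - 1‖ := div_le_self (norm_nonneg _) h1
    _ ≤ ‖I ^ n‖ + ‖(1 : ℂ)‖ := norm_sub_le _ _
    _ = 2 := by norm_num

theorem abs_squareWalkArea_sub_le (n : ℕ) : |squareWalkArea n - 1 / 4 * n| ≤ 1 := by
  set w := ∑ m ∈ range n, I ^ m
  have hw : |w.im - w.re| ≤ 4 :=
    calc |w.im - w.re| ≤ |w.im| + |w.re| := abs_sub _ _
      _ ≤ ‖w‖ + ‖w‖ := add_le_add (abs_im_le_norm w) (abs_re_le_norm w)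
      _ ≤ 4 := by linarith [norm_sum_range_I_pow_le n]
  rw [abs_le] at hw ⊢
  constructor <;> linarith [hw.1, hw.2, four_mul_squareWalkArea n]

theorem tendsto_div_natCast_of_abs_sub_mul_le {u : ℕ → ℝ} {c C : ℝ}
    (h : ∀ n, |u n - c * n| ≤ C) : Tendsto (fun n => u n / n) atTop (𝓝 c) := by
  have hzero : Tendsto (fun n : ℕ => u n / n - c) atTop (𝓝 0) := by
    refine squeeze_zero_norm' ?_ (tendsto_const_div_atTop_nhds_zero_nat C)
    filter_upwards [eventually_gt_atTop 0] with n hn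
    have hn : (0 : ℝ) < n := by exact_mod_cast hn
    have hsub : u n / n - c = (u n - c * n) / n := by field_simp
    rw [Real.norm_eq_abs, hsub, abs_div, abs_of_pos hn]
    gcongr
    exact h n
  simpa using hzero.add_const c

theorem tendsto_squareWalkArea_div :
    Tendsto (fun n => squareWalkArea n / n) atTop (𝓝 (1 / 4)) :=
  tendsto_div_natCast_of_abs_sub_mul_le abs_squareWalkArea_sub_le

section

variable {Ω : Type*} {mΩ : MeasurableSpace Ω} {P : Measure Ω}

theorem integral_discreteArea_rotatingWalk {U : ℕ → Ω → ℝ} {c : ℝ}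
    (hint : ∀ a b, Integrable (fun ω => U a ω * U b ω) P)
    (hcorr : ∀ a b, a < b → ∫ ω, U a ω * U b ω ∂P = c) (n : ℕ) :
    ∫ ω, discreteArea (fun m => ∑ k ∈ range m, (I ^ k).re * U k ω)
      (fun m => ∑ k ∈ range m, (I ^ k).im * U k ω) n ∂P = c * squareWalkArea n := by
  simp only [discreteArea_rotatingWalk, squareWalkArea_eq]
  rw [integral_const_mul, integral_finsetSum _ fun k _ =>
    integrable_finsetSum _ fun d _ => (hint _ _).const_mul _]
  rw [mul_left_comm c]
  congr 1
  rw [mul_sum]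
  refine sum_congr rfl fun k _ => ?_
  rw [integral_finsetSum _ fun d _ => (hint _ _).const_mul _, mul_sum]
  refine sum_congr rfl fun d _ => ?_
  rw [integral_const_mul, hcorr _ _ (by omega), mul_comm]

variable [IsProbabilityMeasure P] {p : ℝ}

theorem ae_eq_one_or_eq_neg_one {V : Ω → ℝ} (hV : Measurable V) (hp0 : 0 ≤ p) (hp1 : p ≤ 1)
    (h1 : P {ω | V ω = 1} = ENNReal.ofReal p) (h2 : P {ω | V ω = -1} = ENNReal.ofReal (1 - p)) :
    ∀ᵐ ω ∂P, V ω = 1 ∨ V ω = -1 := by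
  have hm1 : MeasurableSet {ω | V ω = 1} := hV (measurableSet_singleton 1)
  have hm2 : MeasurableSet {ω | V ω = -1} := hV (measurableSet_singleton (-1))
  have hdisj : Disjoint {ω | V ω = 1} {ω | V ω = -1} :=
    Set.disjoint_left.2 fun ω (h1 : V ω = 1) (h2 : V ω = -1) => by norm_num [h1] at h2
  have hset : {ω | V ω = 1 ∨ V ω = -1} = {ω | V ω = 1} ∪ {ω | V ω = -1} := Set.ofPred_or
  rw [ae_iff_measure_eq (hset ▸ (hm1.union hm2).nullMeasurableSet), hset, measure_union hdisj hm2,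
    h1, h2, ← ENNReal.ofReal_add hp0 (by linarith), measure_univ]
  simp

theorem integral_eq_two_mul_sub_one {V : Ω → ℝ} (hV : Measurable V) (hp0 : 0 ≤ p)
    (hpm : ∀ᵐ ω ∂P, V ω = 1 ∨ V ω = -1) (h1 : P {ω | V ω = 1} = ENNReal.ofReal p) :
    ∫ ω, V ω ∂P = 2 * p - 1 := by
  have hm1 : MeasurableSet {ω | V ω = 1} := hV (measurableSet_singleton 1)
  have hV_ae : V =ᵐ[P] fun ω => {ω | V ω = 1}.indicator (fun _ => (2 : ℝ)) ω - 1 := by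
    filter_upwards [hpm] with ω hω
    rcases hω with hω | hω
    · rw [Set.indicator_of_mem (by exact hω), hω]; norm_num
    · rw [Set.indicator_of_notMem (by norm_num [hω]), hω]; norm_num
  rw [integral_congr_ae hV_ae, integral_sub ((integrable_const 2).indicator hm1) (integrable_const 1),
    integral_indicator_const _ hm1, measureReal_def, h1, ENNReal.toReal_ofReal hp0]
  simp only [smul_eq_mul, integral_const, probReal_univ, mul_one]
  ring

theorem integrable_mul_of_ae_eq_one_or_eq_neg_one {V W : Ω → ℝ} (hV : Measurable V)
    (hW : Measurable W) (hV1 : ∀ᵐ ω ∂P, V ω = 1 ∨ V ω = -1) (hW1 : ∀ᵐ ω ∂P, W ω = 1 ∨ W ω = -1) :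
    Integrable (fun ω => V ω * W ω) P := by
  refine Integrable.of_bound (hV.mul hW).aestronglyMeasurable 1 ?_
  filter_upwards [hV1, hW1] with ω hv hw
  rcases hv with hv | hv <;> rcases hw with hw | hw <;> simp [hv, hw]

end

/-- For the rotating Bernoulli walk `Z'_n = Σ_{k=1}^n i^{k−1} U_k`
(here the variable `U k` stands for `U_{k+1}`, so `X'_n = Σ_{k<n} Re(i^k) U_k` and
`Y'_n = Σ_{k<n} Im(i^k) U_k`), the rescaled expected discrete stochastic area converges
to the area anomaly: `E[A_n(X',Y')]/(2np(1−p)) → (2p−1)²/(8p(1−p))`. -/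
theorem rotating_bernoulli_walk_area_anomaly
    {Ω : Type*} {mΩ : MeasurableSpace Ω} (P : Measure Ω) [IsProbabilityMeasure P]
    (p : ℝ) (hp : p ∈ Set.Ioo (0 : ℝ) 1)
    (U : ℕ → Ω → ℝ)
    (hmeas : ∀ k, Measurable (U k))
    (hindep : iIndepFun U P)
    (hdist1 : ∀ k, P {ω | U k ω = 1} = ENNReal.ofReal p)
    (hdist2 : ∀ k, P {ω | U k ω = -1} = ENNReal.ofReal (1 - p))
    (X' Y' : ℕ → Ω → ℝ)
    (hX' : ∀ n ω, X' n ω = ∑ k ∈ Finset.range n, (Complex.I ^ k).re * U k ω)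
    (hY' : ∀ n ω, Y' n ω = ∑ k ∈ Finset.range n, (Complex.I ^ k).im * U k ω)
    (A : ℕ → Ω → ℝ)
    (hA : ∀ n ω, A n ω = (1 / 2) *
      ∑ k ∈ Finset.Icc 1 n, ∑ l ∈ Finset.Icc (k + 1) n,
        ((X' k ω - X' (k - 1) ω) * (Y' l ω - Y' (l - 1) ω) -
          (Y' k ω - Y' (k - 1) ω) * (X' l ω - X' (l - 1) ω))) :
    Tendsto (fun n : ℕ => (∫ ω, A n ω ∂P) / (2 * n * p * (1 - p))) atTop
      (nhds ((2 * p - 1) ^ 2 / (8 * p * (1 - p)))) := by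
  obtain ⟨hp0, hp1⟩ := hp
  have hpm k := ae_eq_one_or_eq_neg_one (hmeas k) hp0.le hp1.le (hdist1 k) (hdist2 k)
  have hcorr : ∀ a b, a < b → ∫ ω, U a ω * U b ω ∂P = (2 * p - 1) ^ 2 := fun a b hab => by
    rw [(hindep.indepFun hab.ne).integral_fun_mul_eq_mul_integral
      (hmeas a).aestronglyMeasurable (hmeas b).aestronglyMeasurable,
      integral_eq_two_mul_sub_one (hmeas a) hp0.le (hpm a) (hdist1 a),
      integral_eq_two_mul_sub_one (hmeas b) hp0.le (hpm b) (hdist1 b), sq]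
  have hEA n : ∫ ω, A n ω ∂P = (2 * p - 1) ^ 2 * squareWalkArea n := by
    simp only [hA, hX', hY']
    exact integral_discreteArea_rotatingWalk
      (fun a b => integrable_mul_of_ae_eq_one_or_eq_neg_one (hmeas a) (hmeas b) (hpm a) (hpm b))
      hcorr n
  convert tendsto_squareWalkArea_div.const_mul ((2 * p - 1) ^ 2 / (2 * p * (1 - p))) using 2 with n
  · rw [hEA, div_mul_div_comm]
    ring_nf
  · rw [div_mul_div_comm, mul_one]
    ring
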